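/- Characterization of generalized quasi-stationary states by long-run entropy: under the assumptions that the core matrix M̃ has N−1 distinct positive eigenvalues and φ is strictly convex, twice continuously differentiable near 1, with φ(0) = φ(1) = 0, let p ∈ Δ^N with ⟨u^{(1)},p⟩ > 0. Then p ∉ span{e_0, v^{(1)}, e_N} if and only if there exist n_0 ∈ ℕ and p̄ ∈ Δ^N such that E(M^n p̄) < E(M^n p) for all n > n_0. -/

import Mathlib

open Finset Matrix Filter

/-!
On interior states the Moran chain acts through the core matrix `M̃`, and `E(p)` depends only on
the interior part `p̃` of `p`. Jensen's inequality, with weights `v_i u_i` summing to one and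
points `p̃_i / (v_i ⟨u, p̃⟩)` of weighted mean one, shows that the entropy is nonnegative, vanishes
on nonzero multiples of `v`, and is strictly positive otherwise. Since `M̃` has an eigenbasis with
positive eigenvalues it is invertible, so `M̃ⁿ p̃` is a multiple of `v` only if `p̃` is. Hence if
`p ∉ span{e₀, v, e_N}` the choice `p̄ = v` gives `E(Mⁿ p̄) = 0 < E(Mⁿ p)` for all `n`; otherwise
`E(Mⁿ p) = 0` and no `p̄` does better.
-/

noncomputable def moranM (N : ℕ) (s : ℕ → ℝ) : Matrix (Fin (N + 1)) (Fin (N + 1)) ℝ :=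
  fun i j =>
    if (i : ℕ) + 1 = (j : ℕ) then ((j : ℕ) : ℝ) / N * (1 - s (j : ℕ))
    else if (i : ℕ) = (j : ℕ) + 1 then ((N : ℝ) - ((j : ℕ) : ℝ)) / N * s (j : ℕ)
    else if (i : ℕ) = (j : ℕ) then
      1 - ((j : ℕ) : ℝ) / N * (1 - s (j : ℕ)) - ((N : ℝ) - ((j : ℕ) : ℝ)) / N * s (j : ℕ)
    else 0

def IsTypeSelection (N : ℕ) (s : ℕ → ℝ) : Prop :=
  s 0 = 0 ∧ s N = 1 ∧ ∀ i : ℕ, 0 < i → i < N → 0 < s i ∧ s i < 1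

noncomputable def moranCore (N : ℕ) (s : ℕ → ℝ) : Matrix (Fin (N - 1)) (Fin (N - 1)) ℝ :=
  fun i j =>
    moranM N s ⟨(i : ℕ) + 1, by have := i.isLt; omega⟩ ⟨(j : ℕ) + 1, by have := j.isLt; omega⟩

def embIn (N : ℕ) (i : Fin (N - 1)) : Fin (N + 1) :=
  ⟨(i : ℕ) + 1, by have := i.isLt; omega⟩

section PhiEntropy

variable {ι : Type*} [Fintype ι]

noncomputable def phiEntropy (φ : ℝ → ℝ) (u v q : ι → ℝ) : ℝ :=
  ∑ i, φ (q i / (v i * (u ⬝ᵥ q))) * v i * u i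

lemma phiEntropy_eq_sum_smul (φ : ℝ → ℝ) (u v q : ι → ℝ) :
    phiEntropy φ u v q = ∑ i, (v i * u i) • φ (q i / (v i * (u ⬝ᵥ q))) :=
  sum_congr rfl fun i _ => by rw [smul_eq_mul]; ring

variable {φ : ℝ → ℝ} {u v q : ι → ℝ}

lemma sum_mul_smul_div_mul_dotProduct (hv : ∀ i, v i ≠ 0) (hq : u ⬝ᵥ q ≠ 0) :
    ∑ i, (v i * u i) • (q i / (v i * (u ⬝ᵥ q))) = 1 := by
  have hterm : ∀ i, (v i * u i) • (q i / (v i * (u ⬝ᵥ q))) = u i * q i / (u ⬝ᵥ q) := fun i => by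
    rw [smul_eq_mul]; field_simp [hv i]
  simp_rw [hterm, ← sum_div]
  exact div_self hq

lemma phiEntropy_nonneg (hφ : ConvexOn ℝ (Set.Ici 0) φ) (hφ0 : 0 ≤ φ 0) (hφ1 : φ 1 = 0)
    (hv : ∀ i, 0 < v i) (hu : 0 ≤ u) (hq : 0 ≤ q) (huv : u ⬝ᵥ v = 1) :
    0 ≤ phiEntropy φ u v q := by
  rcases (dotProduct_nonneg_of_nonneg hu hq).eq_or_lt with hS | hS
  · simp only [phiEntropy, ← hS, mul_zero, div_zero]
    exact sum_nonneg fun i _ => mul_nonneg (mul_nonneg hφ0 (hv i).le) (hu i)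
  · have hjensen := hφ.map_sum_le (t := univ) (w := fun i => v i * u i)
      (p := fun i => q i / (v i * (u ⬝ᵥ q))) (fun i _ => mul_nonneg (hv i).le (hu i))
      (by rwa [dotProduct_comm] at huv) (fun i _ => div_nonneg (hq i) (mul_pos (hv i) hS).le)
    rwa [sum_mul_smul_div_mul_dotProduct (fun i => (hv i).ne') hS.ne', hφ1,
      ← phiEntropy_eq_sum_smul] at hjensen

lemma phiEntropy_pos (hφ : StrictConvexOn ℝ (Set.Ici 0) φ) (hφ1 : φ 1 = 0)
    (hv : ∀ i, 0 < v i) (hu : ∀ i, 0 < u i) (hq : 0 ≤ q) (huv : u ⬝ᵥ v = 1)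
    (hS : 0 < u ⬝ᵥ q) (hne : q ≠ (u ⬝ᵥ q) • v) :
    0 < phiEntropy φ u v q := by
  have hmean := sum_mul_smul_div_mul_dotProduct (fun i => (hv i).ne') hS.ne'
  have hjensen := (hφ.map_sum_lt_iff_of_pos' (t := univ) (w := fun i => v i * u i)
      (p := fun i => q i / (v i * (u ⬝ᵥ q))) (fun i _ => mul_pos (hv i) (hu i))
      (by rwa [dotProduct_comm] at huv)
      (fun i _ => div_nonneg (hq i) (mul_pos (hv i) hS).le)).2 (by
    rw [hmean]
    contrapose! hne
    ext i
    rw [(div_eq_one_iff_eq (mul_pos (hv i) hS).ne').1 (hne i (mem_univ i)), Pi.smul_apply,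
      smul_eq_mul, mul_comm])
  rwa [hmean, hφ1, ← phiEntropy_eq_sum_smul] at hjensen

lemma phiEntropy_smul_self (hv : ∀ i, v i ≠ 0) (huv : u ⬝ᵥ v = 1) {c : ℝ}
    (hc : c ≠ 0) : phiEntropy φ u v (c • v) = φ 1 := by
  have hratio : ∀ i, (c • v) i / (v i * (u ⬝ᵥ c • v)) = 1 := fun i => by
    rw [dotProduct_smul, huv, Pi.smul_apply, smul_eq_mul, smul_eq_mul, mul_one, mul_comm]
    exact div_self (mul_ne_zero (hv i) hc)
  simp only [phiEntropy, hratio, mul_assoc, ← mul_sum]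
  rw [← dotProduct, dotProduct_comm, huv, mul_one]

end PhiEntropy

namespace Matrix

variable {ι K : Type*} [Fintype ι] [DecidableEq ι]

section CommSemiring

variable [CommSemiring K] {M : Matrix ι ι K} {μ : K}

theorem pow_mulVec_of_mulVec_eq_smul {v : ι → K} (h : M *ᵥ v = μ • v) (n : ℕ) :
    M ^ n *ᵥ v = μ ^ n • v := by
  induction n with
  | zero => simp
  | succ n ih => rw [pow_succ', ← mulVec_mulVec, ih, mulVec_smul, h, smul_smul, pow_succ]

theorem vecMul_pow_of_vecMul_eq_smul {u : ι → K} (h : u ᵥ* M = μ • u) (n : ℕ) :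
    u ᵥ* M ^ n = μ ^ n • u := by
  induction n with
  | zero => simp
  | succ n ih => rw [pow_succ, ← vecMul_vecMul, ih, smul_vecMul, h, smul_smul, pow_succ]

theorem dotProduct_pow_mulVec_of_vecMul_eq_smul {u : ι → K} (h : u ᵥ* M = μ • u) (n : ℕ)
    (q : ι → K) : u ⬝ᵥ M ^ n *ᵥ q = μ ^ n * (u ⬝ᵥ q) := by
  rw [dotProduct_mulVec, vecMul_pow_of_vecMul_eq_smul h, smul_dotProduct, smul_eq_mul]

end CommSemiring

theorem isUnit_of_linearIndependent_eigenvectors [Field K] {M : Matrix ι ι K}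
    {V : ι → ι → K} {μ : ι → K} (hV : LinearIndependent K V) (hMV : ∀ i, M *ᵥ V i = μ i • V i)
    (hμ : ∀ i, μ i ≠ 0) : IsUnit M := by
  rw [← mulVec_surjective_iff_isUnit, ← coe_mulVecLin, ← LinearMap.range_eq_top, eq_top_iff,
    ← hV.span_eq_top_of_card_eq_finrank' (by simp), Submodule.span_le]
  rintro _ ⟨i, rfl⟩
  exact ⟨(μ i)⁻¹ • V i, by
    rw [mulVecLin_apply, mulVec_smul, hMV, smul_smul, inv_mul_cancel₀ (hμ i), one_smul]⟩

theorem eq_div_smul_of_mulVec_eq_smul [Field K] {M : Matrix ι ι K} (hM : IsUnit M)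
    {v x : ι → K} {μ b : K} (hv : M *ᵥ v = μ • v) (hμ : μ ≠ 0) (hx : M *ᵥ x = b • v) :
    x = (b / μ) • v := by
  apply mulVec_injective_iff_isUnit.2 hM
  rw [hx, mulVec_smul, hv, smul_smul, div_mul_cancel₀ b hμ]

theorem pow_mulVec_nonneg [CommSemiring K] [PartialOrder K] [IsOrderedRing K] {A : Matrix ι ι K}
    (hA : ∀ i j, 0 ≤ A i j) {q : ι → K} (hq : 0 ≤ q) (n : ℕ) : 0 ≤ A ^ n *ᵥ q := by
  induction n with
  | zero => simpa
  | succ n ih =>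
    rw [pow_succ', ← mulVec_mulVec]
    exact fun i => sum_nonneg fun j _ => mul_nonneg (hA i j) (ih j)

end Matrix

section Moran

variable {N : ℕ} {s : ℕ → ℝ}

lemma embIn_injective (N : ℕ) : Function.Injective (embIn N) := fun a b h => by
  simpa [embIn, Fin.ext_iff] using h

lemma eq_zero_or_eq_last_or_eq_embIn (j : Fin (N + 1)) :
    j = 0 ∨ j = Fin.last N ∨ ∃ i, j = embIn N i := by
  rcases j with ⟨j, hj⟩
  by_cases h0 : j = 0
  · exact .inl (Fin.ext h0)
  by_cases hN : j = N
  · exact .inr (.inl (Fin.ext hN))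
  exact .inr (.inr ⟨⟨j - 1, by omega⟩, Fin.ext (by simp only [embIn]; omega)⟩)

lemma sum_eq_sum_embIn {A : Type*} [AddCommMonoid A] {f : Fin (N + 1) → A}
    (h0 : f 0 = 0) (hN : f (Fin.last N) = 0) :
    ∑ j, f j = ∑ i, f (embIn N i) := by
  rw [← sum_image fun a _ b _ h => embIn_injective N h]
  refine (sum_subset (subset_univ _) fun j _ hj => ?_).symm
  rcases eq_zero_or_eq_last_or_eq_embIn j with rfl | rfl | ⟨i, rfl⟩
  · exact h0
  · exact hN
  · exact absurd (mem_image_of_mem _ (mem_univ i)) hj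

lemma moranM_embIn_zero (hs0 : s 0 = 0) (i : Fin (N - 1)) :
    moranM N s (embIn N i) 0 = 0 := by
  simp [moranM, embIn, hs0]

lemma moranM_embIn_last (hsN : s N = 1) (i : Fin (N - 1)) :
    moranM N s (embIn N i) (Fin.last N) = 0 := by
  have := i.isLt
  simp [moranM, embIn, hsN]
  omega

lemma moranM_mulVec_comp_embIn (hs0 : s 0 = 0) (hsN : s N = 1) (q : Fin (N + 1) → ℝ) :
    (moranM N s *ᵥ q) ∘ embIn N = moranCore N s *ᵥ (q ∘ embIn N) := by
  ext i
  exact sum_eq_sum_embIn (mul_eq_zero_of_left (moranM_embIn_zero hs0 i) _)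
    (mul_eq_zero_of_left (moranM_embIn_last hsN i) _)

lemma moranM_pow_mulVec_comp_embIn (hs0 : s 0 = 0) (hsN : s N = 1) (n : ℕ)
    (q : Fin (N + 1) → ℝ) :
    (moranM N s ^ n *ᵥ q) ∘ embIn N = moranCore N s ^ n *ᵥ (q ∘ embIn N) := by
  induction n generalizing q with
  | zero => simp
  | succ n ih =>
    rw [pow_succ, ← mulVec_mulVec, ih, moranM_mulVec_comp_embIn hs0 hsN, mulVec_mulVec,
      pow_succ]

lemma moranM_nonneg (hN : 0 < N) {j : Fin (N + 1)} (hs : s j ∈ Set.Icc 0 1)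
    (i : Fin (N + 1)) : 0 ≤ moranM N s i j := by
  obtain ⟨hs0, hs1⟩ := hs
  have hjN : ((j : ℕ) : ℝ) ≤ N := by exact_mod_cast Nat.lt_succ_iff.1 j.isLt
  have ha : 0 ≤ ((j : ℕ) : ℝ) / N := by positivity
  have hb : 0 ≤ ((N : ℝ) - (j : ℕ)) / N := div_nonneg (by linarith) (by positivity)
  have hab : ((j : ℕ) : ℝ) / N + ((N : ℝ) - (j : ℕ)) / N = 1 := by field_simp; ring
  simp only [moranM]
  split_ifs <;> nlinarith

lemma moranCore_nonneg (hs : IsTypeSelection N s) (i j : Fin (N - 1)) :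
    0 ≤ moranCore N s i j := by
  have hj := j.isLt
  obtain ⟨h0, h1⟩ := hs.2.2 (j + 1) (by omega) (by omega)
  exact moranM_nonneg (by omega) ⟨h0.le, h1.le⟩ _

lemma mem_span_boundary_iff (hN : N ≠ 0) {w g : Fin (N + 1) → ℝ}
    (hw0 : w 0 = 0) (hwN : w (Fin.last N) = 0) :
    g ∈ Submodule.span ℝ {Pi.single 0 1, w, Pi.single (Fin.last N) 1} ↔
      ∃ b : ℝ, g ∘ embIn N = b • (w ∘ embIn N) := by
  have hne : (0 : Fin (N + 1)) ≠ Fin.last N := by simp [Fin.ext_iff, hN.symm]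
  have h0 : ∀ i, embIn N i ≠ 0 := fun i => by simp [embIn, Fin.ext_iff]
  have hlast : ∀ i, embIn N i ≠ Fin.last N := fun i => by
    have := i.isLt; simp [embIn, Fin.ext_iff]; omega
  rw [Submodule.mem_span_triple]
  constructor
  · rintro ⟨a, b, c, rfl⟩
    exact ⟨b, funext fun i => by simp [h0 i, hlast i]⟩
  · rintro ⟨b, hb⟩
    refine ⟨g 0, b, g (Fin.last N), funext fun j => ?_⟩
    rcases eq_zero_or_eq_last_or_eq_embIn j with rfl | rfl | ⟨i, rfl⟩
    · simp [hw0, hne.symm]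
    · simp [hwN, hne]
    · simpa [h0 i, hlast i] using (congrFun hb i).symm

end Moran

/-- characterization of generalized quasi-stationary states by
long-run entropy: p ∉ span{e₀, v^{(1)}, e_N} iff some other initial condition
eventually has strictly smaller entropy along the evolution. -/
theorem moran_quasi_stationary_characterization
    (N : ℕ) (hN : 2 ≤ N) (s : ℕ → ℝ) (hs : IsTypeSelection N s)
    (μ : Fin (N - 1) → ℝ) (hμpos : ∀ i, 0 < μ i)
    (V U : Fin (N - 1) → (Fin (N - 1) → ℝ))
    (hVli : LinearIndependent ℝ V)
    (hMV : ∀ i, (moranCore N s).mulVec (V i) = μ i • V i)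
    (hUM : ∀ i, (moranCore N s).vecMul (U i) = μ i • U i)
    (i0 : Fin (N - 1))
    (hV1sum : ∑ j, V i0 j = 1) (hUV : ∀ i, ∑ j, U i j * V i j = 1)
    (hVpos : ∀ j, 0 < V i0 j) (hUpos : ∀ j, 0 < U i0 j)
    (vext : Fin (N + 1) → ℝ)
    (hvx0 : vext ⟨0, by omega⟩ = 0) (hvxN : vext (Fin.last N) = 0)
    (hvxi : ∀ i : Fin (N - 1), vext (embIn N i) = V i0 i)
    (φ : ℝ → ℝ) (hφ : StrictConvexOn ℝ (Set.Ici 0) φ)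
    (hφ0 : φ 0 = 0) (hφ1 : φ 1 = 0)
    (p : Fin (N + 1) → ℝ) (hp : ∀ i, 0 ≤ p i)
    (hip : 0 < ∑ i : Fin (N - 1), U i0 i * p (embIn N i))
    (E : (Fin (N + 1) → ℝ) → ℝ)
    (hE : ∀ q : Fin (N + 1) → ℝ, E q = ∑ i : Fin (N - 1),
      φ (q (embIn N i) / (V i0 i * ∑ j : Fin (N - 1), U i0 j * q (embIn N j)))
        * V i0 i * U i0 i) :
    p ∉ Submodule.span ℝ
        ({(Pi.single (⟨0, by omega⟩ : Fin (N + 1)) 1 : Fin (N + 1) → ℝ), vext,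
          (Pi.single (Fin.last N) 1 : Fin (N + 1) → ℝ)} : Set (Fin (N + 1) → ℝ)) ↔
      ∃ (n0 : ℕ) (pb : Fin (N + 1) → ℝ), (∀ i, 0 ≤ pb i) ∧ (∑ i, pb i = 1) ∧
        ∀ n : ℕ, n0 < n →
          E ((moranM N s ^ n).mulVec pb) < E ((moranM N s ^ n).mulVec p) := by
  set C := moranCore N s
  rw [Fin.zero_eta] at hvx0 ⊢
  have hvcore : vext ∘ embIn N = V i0 := funext hvxi
  have hEcore (n : ℕ) (q : Fin (N + 1) → ℝ) :
      E (moranM N s ^ n *ᵥ q) = phiEntropy φ (U i0) (V i0) (C ^ n *ᵥ (q ∘ embIn N)) := by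
    rw [hE, ← moranM_pow_mulVec_comp_embIn hs.1 hs.2.1]
    rfl
  have hEstat (n : ℕ) {q : Fin (N + 1) → ℝ} {c : ℝ} (hc : c ≠ 0)
      (hq : q ∘ embIn N = c • V i0) : E (moranM N s ^ n *ᵥ q) = 0 := by
    rw [hEcore, hq, mulVec_smul, pow_mulVec_of_mulVec_eq_smul (hMV i0), smul_smul,
      phiEntropy_smul_self (fun i => (hVpos i).ne') (hUV i0)
        (mul_ne_zero hc (pow_pos (hμpos i0) n).ne'), hφ1]
  have hCnonneg (n : ℕ) {q : Fin (N + 1) → ℝ} (hq : ∀ i, 0 ≤ q i) :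
      0 ≤ C ^ n *ᵥ (q ∘ embIn N) :=
    pow_mulVec_nonneg (moranCore_nonneg hs) (fun i => hq _) n
  rw [mem_span_boundary_iff (by omega) hvx0 hvxN, hvcore]
  constructor
  · intro hpV
    refine ⟨0, vext, ?_, ?_, fun n _ => ?_⟩
    · intro j
      rcases eq_zero_or_eq_last_or_eq_embIn j with rfl | rfl | ⟨i, rfl⟩
      exacts [hvx0.ge, hvxN.ge, (hvxi i).symm ▸ (hVpos i).le]
    · rw [sum_eq_sum_embIn hvx0 hvxN, ← hV1sum]
      exact sum_congr rfl fun i _ => hvxi i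
    have hS : 0 < U i0 ⬝ᵥ C ^ n *ᵥ (p ∘ embIn N) := by
      rw [dotProduct_pow_mulVec_of_vecMul_eq_smul (hUM i0)]
      exact mul_pos (pow_pos (hμpos i0) n) hip
    rw [hEstat n one_ne_zero (hvcore.trans (one_smul ℝ _).symm), hEcore]
    have hCunit : IsUnit (C ^ n) :=
      (isUnit_of_linearIndependent_eigenvectors hVli hMV fun i => (hμpos i).ne').pow n
    refine phiEntropy_pos hφ hφ1 hVpos hUpos (hCnonneg n hp) (hUV i0) hS fun h => hpV ⟨_,
      eq_div_smul_of_mulVec_eq_smul hCunit (pow_mulVec_of_mulVec_eq_smul (hMV i0) n)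
        (pow_pos (hμpos i0) n).ne' h⟩
  · rintro ⟨n0, pb, hpb, -, hlt⟩ ⟨b, hb⟩
    have hb0 : b ≠ 0 := by
      rintro rfl
      rw [zero_smul] at hb
      exact hip.ne' (show U i0 ⬝ᵥ (p ∘ embIn N) = 0 by rw [hb, dotProduct_zero])
    have hlt' := hlt (n0 + 1) n0.lt_succ_self
    rw [hEstat _ hb0 hb, hEcore] at hlt'
    exact (phiEntropy_nonneg hφ.convexOn hφ0.ge hφ1 hVpos (fun i => (hUpos i).le)
      (hCnonneg _ hpb) (hUV i0)).not_gt hlt'
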